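/- For all n ≥ 0, s(n+1) - s(n) ≠ 0; i.e., no two consecutive terms of the infinity series are equal. -/
import Mathlib


def s : ℕ → ℤ
  | 0 => 0
  | n + 1 =>
    if (n + 1) % 2 = 0 then -s ((n + 1) / 2)
    else s (n / 2) + 1
decreasing_by all_goals omega

lemma s_odd (k : ℕ) : s (2 * k + 1) = s k + 1 := by
  rw [show 2 * k + 1 = (2 * k) + 1 by ring, s]
  have h1 : (2 * k + 1) % 2 = 1 := by omega
  have h2 : (2 * k) / 2 = k := by omega
  simp [h1, h2]

lemma s_even (k : ℕ) : s (2 * k + 2) = -s (k + 1) := by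
  rw [show 2 * k + 2 = (2 * k + 1) + 1 by ring, s]
  have h1 : (2 * k + 1 + 1) % 2 = 0 := by omega
  have h2 : (2 * k + 1 + 1) / 2 = k + 1 := by omega
  simp [h1, h2]

lemma s_zero : s 0 = 0 := by rw [s]

lemma key (n : ℕ) : Odd (s (n + 1) - s n) ∨ s (n + 1) - s n < 0 := by
  induction n using Nat.strong_induction_on with
  | _ n ih =>
    rcases Nat.even_or_odd n with ⟨m, hm⟩ | ⟨m, hm⟩
    · -- n = 2 * m
      rw [show n = 2 * m from by omega]
      rw [s_odd]
      rcases Nat.eq_zero_or_pos m with rfl | hpos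
      · left
        have h1 : s 1 = 1 := by rw [show (1:ℕ) = 2 * 0 + 1 from rfl, s_odd, s_zero]; ring
        norm_num [h1, s_zero]
      · obtain ⟨k, rfl⟩ : ∃ k, m = k + 1 := ⟨m - 1, by omega⟩
        rw [show 2 * (k + 1) = 2 * k + 2 by ring, s_even]
        left; exact ⟨s (k + 1), by ring⟩
    · -- n = 2 * m + 1
      rw [show n = 2 * m + 1 from hm]
      have e1 : s (2 * m + 1 + 1) = -s (m + 1) := by
        rw [show 2 * m + 1 + 1 = 2 * m + 2 by ring, s_even]
      rw [e1, s_odd]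
      rcases Nat.even_or_odd m with ⟨j, hj⟩ | ⟨j, hj⟩
      · -- m = 2 * j
        rw [show m = 2 * j from by omega]
        have e2 : s (2 * j + 1) = s j + 1 := s_odd j
        rcases Nat.eq_zero_or_pos j with rfl | hpos
        · right
          have h1 : s 1 = 1 := by rw [show (1:ℕ) = 2 * 0 + 1 from rfl, s_odd, s_zero]; ring
          norm_num [h1, s_zero]
        · obtain ⟨k, rfl⟩ : ∃ k, j = k + 1 := ⟨j - 1, by omega⟩
          rw [s_odd, show 2 * (k + 1) = 2 * k + 2 by ring, s_even]
          right; omega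
      · -- m = 2 * j + 1
        rw [show m = 2 * j + 1 from hj]
        rw [show 2 * j + 1 + 1 = 2 * j + 2 by ring, s_even, s_odd]
        rcases ih j (by omega) with ⟨c, hc⟩ | h
        · left; exact ⟨c - 1, by omega⟩
        · right; omega

theorem stmt8 (n : ℕ) : s (n + 1) - s n ≠ 0 := by
  rcases key n with ⟨c, hc⟩ | h
  · omega
  · omega
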